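/- Let K ∈ L(H) have closed range and suppose ((x_j), (y_j)) is a K-biframe for H. Then ((x_j), (y_j)) is also a φ(K)-biframe for H, where φ(K) = (K†)*. -/
import Mathlib


open ContinuousLinearMap
open scoped InnerProductSpace ComplexOrder

/-- `Kd` is the Moore–Penrose inverse of `K`. -/
def IsMoorePenrose {H : Type*} [NormedAddCommGroup H] [InnerProductSpace ℂ H]
    [CompleteSpace H] (K Kd : H →L[ℂ] H) : Prop :=
  K ∘L Kd ∘L K = K ∧ Kd ∘L K ∘L Kd = Kd ∧
    IsSelfAdjoint (K ∘L Kd) ∧ IsSelfAdjoint (Kd ∘L K)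

/-- `((x j), (y j))` is a `K`-biframe for `H` (for some bounds `α, β > 0`). -/
def IsKBiframe {H : Type*} [NormedAddCommGroup H] [InnerProductSpace ℂ H]
    [CompleteSpace H] {J : Type*} (K : H →L[ℂ] H) (x y : J → H) : Prop :=
  ∃ α β : ℝ, 0 < α ∧ 0 < β ∧ ∀ v : H,
    (α : ℂ) * (‖adjoint K v‖ : ℂ)^2 ≤ ∑' j, ⟪v, x j⟫_ℂ * ⟪y j, v⟫_ℂ ∧
    ∑' j, ⟪v, x j⟫_ℂ * ⟪y j, v⟫_ℂ ≤ (β : ℂ) * (‖v‖ : ℂ)^2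

theorem biframe_phi_invariant
    {H : Type*} [NormedAddCommGroup H] [InnerProductSpace ℂ H] [CompleteSpace H]
    {J : Type*} (K Kd : H →L[ℂ] H) (x y : J → H)
    (hcl : IsClosed (Set.range K)) (hMP : IsMoorePenrose K Kd)
    (h : IsKBiframe K x y) :
    IsKBiframe (adjoint Kd) x y := by
  obtain ⟨α, β, hα, hβ, hv⟩ := h
  set C : ℝ := ‖Kd ∘L adjoint Kd‖ with hC
  have hCnn : 0 ≤ C := norm_nonneg _
  refine ⟨α / (C + 1)^2, β, by positivity, hβ, fun v => ?_⟩
  refine ⟨?_, (hv v).2⟩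
  -- key: ‖Kd v‖ ≤ C * ‖adjoint K v‖
  have hsa : adjoint (K ∘L Kd) = K ∘L Kd := hMP.2.2.1
  have hkey : ∀ w : H, ‖Kd w‖ ≤ C * ‖adjoint K w‖ := by
    intro w
    have h2 : K (Kd w) = (adjoint Kd) ((adjoint K) w) := by
      calc K (Kd w) = (K ∘L Kd) w := rfl
        _ = adjoint (K ∘L Kd) w := by rw [hsa]
        _ = (adjoint Kd) ((adjoint K) w) := by rw [adjoint_comp]; rfl
    have h1 : Kd w = (Kd ∘L adjoint Kd) (adjoint K w) := by
      have := (congrFun (congrArg DFunLike.coe hMP.2.1) w).symm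
      simp only [comp_apply] at this ⊢
      rw [this, h2]
    rw [h1]
    exact (Kd ∘L adjoint Kd).le_opNorm _
  have hb := (hv v).1
  refine le_trans ?_ hb
  rw [adjoint_adjoint]
  have haux : (α / (C + 1)^2) * ‖Kd v‖^2 ≤ α * ‖adjoint K v‖^2 := by
    have h2 := hkey v
    have h3 : ‖Kd v‖^2 ≤ (C+1)^2 * ‖adjoint K v‖^2 := by
      nlinarith [norm_nonneg (Kd v), norm_nonneg (adjoint K v)]
    rw [div_mul_eq_mul_div, div_le_iff₀ (by positivity)]
    nlinarith
  exact_mod_cast haux
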